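/- Let R ∈ k(x)^{n×p} be a rational matrix of rank r, and let N = φ_1(R)·R be its polynomial numerator matrix with Smith normal form having invariant factors γ_1 | γ_2 | ⋯ | γ_r. Write γ_i/φ_1(R) in lowest terms as ε_i/ψ_i with ψ_i monic. Then the determinantal denominators of R satisfy φ_i(R) = ψ_1·ψ_2⋯ψ_i for all 1 ≤ i ≤ r. -/

import Mathlib

open Polynomial

noncomputable section

/-- Normalization on a field: every nonzero element normalizes to `1`. -/
noncomputable def fieldNormalizationMonoid (K : Type*) [Field K] : NormalizationMonoid K := by
  classical
  exact
  { normUnit := fun a => if h : a = 0 then 1 else (Units.mk0 a h)⁻¹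
    normUnit_zero := dif_pos rfl
    normUnit_one := by
      rw [dif_neg one_ne_zero]
      exact Units.ext (by simp)
    normUnit_mul_units := fun {a} u ha => by
      rw [dif_neg (mul_ne_zero ha u.ne_zero), dif_neg ha]
      exact Units.ext (by simp <;> ring) }

attribute [local instance] fieldNormalizationMonoid

noncomputable local instance (K : Type*) [Field K] : NormalizedGCDMonoid (Polynomial K) :=
  UniqueFactorizationMonoid.toNormalizedGCDMonoid _

variable {k : Type*} [Field k] [CharZero k]

/-- The ℓ-th determinantal denominator of a rational matrix: the monic least common
denominator of all minors of size at most ℓ. -/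
def detDen {n p : ℕ} (R : Matrix (Fin n) (Fin p) (RatFunc k)) (ℓ : ℕ) : Polynomial k :=
  (Finset.range (ℓ + 1)).lcm fun i =>
    (Finset.univ : Finset ((Fin i ↪ Fin n) × (Fin i ↪ Fin p))).lcm fun fg =>
      (Matrix.det fun a b => R (fg.1 a) (fg.2 b)).denom


/-!
Indices start at `0`: `γ j`, `ε j`, `ψ j` are the paper's `γ_{j+1}`, `ε_{j+1}`, `ψ_{j+1}`, and
`detDen R ℓ` is `φ_ℓ(R)`. Write `φ = φ_1(R)`, `Γ_ℓ = γ 0 ⋯ γ (ℓ-1)`, and `E_ℓ`, `Ψ_ℓ` likewise.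

An `ℓ × ℓ` minor of `R` is the corresponding minor of `N` divided by `φ ^ ℓ`, and the ideal of
`ℓ × ℓ` minors of `N` is that of its Smith form, which is generated by `Γ_ℓ`. Hence every
`ℓ × ℓ` minor of `R` is a multiple of `Γ_ℓ / φ ^ ℓ = E_ℓ / Ψ_ℓ`, so `φ_ℓ ∣ Ψ_ℓ`. Conversely
`Γ_ℓ` is itself a minor of the Smith form, hence a combination of minors of `N`, which gives
`φ ^ ℓ ∣ Γ_ℓ φ_ℓ`. By induction on `ℓ`, the quotient `Ψ_ℓ / φ_ℓ` then divides both `ψ (ℓ-1)` and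
`E_ℓ`, which are coprime because `ψ (ℓ-1) ∣ ψ j` for `j < ℓ`; as both sides are monic,
`φ_ℓ = Ψ_ℓ`.
-/

open Finset

theorem dvd_of_le_of_forall_dvd_succ {M : Type*} [Monoid M] {f : ℕ → M} {r : ℕ}
    (hf : ∀ i, i + 1 < r → f i ∣ f (i + 1)) {a b : ℕ} (hab : a ≤ b) (hbr : b < r) :
    f a ∣ f b := by
  induction b, hab using Nat.le_induction with
  | base => exact dvd_rfl
  | succ b _ ih => exact (ih (by omega)).trans (hf b hbr)

theorem dvd_of_le_of_forall_succ_dvd {M : Type*} [Monoid M] {f : ℕ → M} {r : ℕ}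
    (hf : ∀ i, i + 1 < r → f (i + 1) ∣ f i) {a b : ℕ} (hab : a ≤ b) (hbr : b < r) :
    f b ∣ f a := by
  induction b, hab using Nat.le_induction with
  | base => exact dvd_rfl
  | succ b _ ih => exact (hf b hbr).trans (ih (by omega))

theorem Finset.prod_range_card_dvd_prod {M : Type*} [CommMonoid M] {f : ℕ → M} {r : ℕ}
    (hf : ∀ i, i + 1 < r → f i ∣ f (i + 1)) (s : Finset ℕ) (hs : ∀ x ∈ s, x < r) :
    ∏ j ∈ range #s, f j ∣ ∏ x ∈ s, f x := by
  induction s using Finset.induction_on_max with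
  | empty => simp
  | insert a s has ih =>
    have hcard : #s ≤ a := by
      simpa using card_le_card fun x hx => mem_range.2 (has x hx)
    rw [card_insert_of_notMem fun h => (has a h).false, prod_range_succ,
      prod_insert fun h => (has a h).false, mul_comm (f a)]
    exact mul_dvd_mul (ih fun x hx => hs x (mem_insert_of_mem hx))
      (dvd_of_le_of_forall_dvd_succ hf hcard (hs a (mem_insert_self a s)))

theorem prod_range_mul_prod_range_eq_prod_range_mul_pow {M : Type*} [CommMonoid M]
    {γ ε ψ : ℕ → M} {c : M} {ℓ : ℕ} (h : ∀ j < ℓ, γ j * ψ j = ε j * c) :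
    (∏ j ∈ range ℓ, γ j) * ∏ j ∈ range ℓ, ψ j = (∏ j ∈ range ℓ, ε j) * c ^ ℓ := by
  rw [← prod_mul_distrib, prod_congr rfl fun j hj => h j (mem_range.1 hj), prod_mul_distrib,
    prod_const, card_range]

/-- Read as fractions: `a / c = e / d` and `a' / c = e' / d'`, the latter in lowest terms. -/
theorem IsCoprime.dvd_of_dvd_of_mul_eq_mul {A : Type*} [CommRing A] [IsDomain A]
    {a a' e e' d d' c : A} (hcop : IsCoprime e' d') (hc : c ≠ 0) (h : a * d = e * c)
    (h' : a' * d' = e' * c) (ha : a ∣ a') : d' ∣ d := by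
  obtain ⟨t, rfl⟩ := ha
  have key : e' * d * c = e * t * d' * c := by linear_combination (-d) * h' + (t * d') * h
  exact hcop.symm.dvd_of_dvd_mul_left ⟨e * t, by rw [mul_right_cancel₀ hc key]; ring⟩

namespace Matrix

variable {α : Type*} [CommRing α]

theorem det_submatrix_eq_zero_of_not_injective_left {m n : Type*} {ℓ : ℕ} (M : Matrix m n α)
    {f : Fin ℓ → m} (g : Fin ℓ → n) (hf : ¬ Function.Injective f) :
    (M.submatrix f g).det = 0 := by
  obtain ⟨a, b, hab, hne⟩ : ∃ a b, f a = f b ∧ a ≠ b := by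
    simpa [Function.Injective] using hf
  exact det_zero_of_row_eq hne (by ext c; simp [hab])

theorem det_submatrix_eq_zero_of_not_injective_right {m n : Type*} {ℓ : ℕ} (M : Matrix m n α)
    (f : Fin ℓ → m) {g : Fin ℓ → n} (hg : ¬ Function.Injective g) :
    (M.submatrix f g).det = 0 := by
  rw [← det_transpose, transpose_submatrix]
  exact det_submatrix_eq_zero_of_not_injective_left _ _ hg

def minorIdeal {m n : Type*} (ℓ : ℕ) (M : Matrix m n α) : Ideal α :=
  Ideal.span {x | ∃ (f : Fin ℓ → m) (g : Fin ℓ → n), (M.submatrix f g).det = x}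

theorem det_submatrix_mem_minorIdeal {m n : Type*} {ℓ : ℕ} (M : Matrix m n α)
    (f : Fin ℓ → m) (g : Fin ℓ → n) : (M.submatrix f g).det ∈ minorIdeal ℓ M :=
  Ideal.subset_span ⟨f, g, rfl⟩

theorem minorIdeal_le_iff {m n : Type*} {ℓ : ℕ} {M : Matrix m n α} {I : Ideal α} :
    minorIdeal ℓ M ≤ I ↔ ∀ (f : Fin ℓ → m) (g : Fin ℓ → n), (M.submatrix f g).det ∈ I := by
  rw [minorIdeal, Ideal.span_le]
  exact ⟨fun h f g => h ⟨f, g, rfl⟩, fun h _ ⟨f, g, hx⟩ => hx ▸ h f g⟩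

theorem minorIdeal_le_iff_embedding {m n : Type*} {ℓ : ℕ} {M : Matrix m n α} {I : Ideal α} :
    minorIdeal ℓ M ≤ I ↔ ∀ (f : Fin ℓ ↪ m) (g : Fin ℓ ↪ n), (M.submatrix f g).det ∈ I := by
  refine minorIdeal_le_iff.trans ⟨fun h f g => h f g, fun h f g => ?_⟩
  by_cases hf : Function.Injective f
  · by_cases hg : Function.Injective g
    · exact h ⟨f, hf⟩ ⟨g, hg⟩
    · rw [det_submatrix_eq_zero_of_not_injective_right M f hg]; exact I.zero_mem
  · rw [det_submatrix_eq_zero_of_not_injective_left M g hf]; exact I.zero_mem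

/-- Cauchy–Binet, with `t` ranging over all maps rather than over increasing ones. -/
theorem det_submatrix_mul_eq_sum {l m n : Type*} [Fintype m] [DecidableEq m] {ℓ : ℕ}
    (A : Matrix l m α) (M : Matrix m n α) (f : Fin ℓ → l) (g : Fin ℓ → n) :
    ((A * M).submatrix f g).det =
      ∑ t : Fin ℓ → m, (∏ a, A (f a) (t a)) * (M.submatrix t g).det := by
  have hrows : (A * M).submatrix f g = fun a => ∑ j, A (f a) j • fun b => M j (g b) := by
    ext a b
    simp [mul_apply, Finset.sum_apply]
  rw [det, hrows]
  refine ((detRowAlternating (R := α) (n := Fin ℓ)).toMultilinearMap.map_sum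
    fun a j => A (f a) j • fun b => M j (g b)).trans (sum_congr rfl fun t _ => ?_)
  exact ((detRowAlternating (R := α) (n := Fin ℓ)).toMultilinearMap.map_smul_univ _ _).trans
    (smul_eq_mul _ _)

theorem minorIdeal_mul_left_le {l m n : Type*} [Fintype m] [DecidableEq m] (ℓ : ℕ)
    (A : Matrix l m α) (M : Matrix m n α) : minorIdeal ℓ (A * M) ≤ minorIdeal ℓ M :=
  minorIdeal_le_iff.2 fun f g => by
    rw [det_submatrix_mul_eq_sum]
    exact Ideal.sum_mem _ fun t _ => Ideal.mul_mem_left _ _ (det_submatrix_mem_minorIdeal M t g)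

theorem minorIdeal_transpose_le {m n : Type*} (ℓ : ℕ) (M : Matrix m n α) :
    minorIdeal ℓ Mᵀ ≤ minorIdeal ℓ M :=
  minorIdeal_le_iff.2 fun f g => by
    rw [← transpose_submatrix, det_transpose]
    exact det_submatrix_mem_minorIdeal M g f

theorem minorIdeal_mul_right_le {m n o : Type*} [Fintype n] [DecidableEq n] (ℓ : ℕ)
    (M : Matrix m n α) (B : Matrix n o α) : minorIdeal ℓ (M * B) ≤ minorIdeal ℓ M := by
  have h := minorIdeal_mul_left_le ℓ Bᵀ Mᵀ
  rw [← transpose_mul] at h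
  simpa using (minorIdeal_transpose_le ℓ (M * B)ᵀ).trans (h.trans (minorIdeal_transpose_le ℓ M))

theorem minorIdeal_mul_mul_of_isUnit_det {m n : Type*} [Fintype m] [DecidableEq m] [Fintype n]
    [DecidableEq n] (ℓ : ℕ) {A : Matrix m m α} {B : Matrix n n α} (hA : IsUnit A.det)
    (hB : IsUnit B.det) (M : Matrix m n α) : minorIdeal ℓ (A * M * B) = minorIdeal ℓ M := by
  refine le_antisymm ((minorIdeal_mul_right_le ℓ _ B).trans (minorIdeal_mul_left_le ℓ A M)) ?_
  have hM : M = A⁻¹ * (A * M * B) * B⁻¹ := by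
    rw [Matrix.mul_assoc A, ← Matrix.mul_assoc A⁻¹, nonsing_inv_mul A hA, Matrix.one_mul,
      Matrix.mul_assoc, mul_nonsing_inv B hB, Matrix.mul_one]
  conv_lhs => rw [hM]
  exact (minorIdeal_mul_right_le ℓ _ _).trans (minorIdeal_mul_left_le ℓ _ _)

theorem algebraMap_det_submatrix_of_map_eq_smul {A B : Type*} [CommRing A] [CommRing B]
    [Algebra A B] {m n : Type*} {ℓ : ℕ} {N : Matrix m n A} {R : Matrix m n B} {c : A}
    (hN : N.map (algebraMap A B) = algebraMap A B c • R) (f : Fin ℓ → m) (g : Fin ℓ → n) :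
    algebraMap A B (N.submatrix f g).det = algebraMap A B c ^ ℓ * (R.submatrix f g).det := by
  rw [RingHom.map_det, RingHom.mapMatrix_apply, ← submatrix_map, hN,
    show (algebraMap A B c • R).submatrix f g = algebraMap A B c • R.submatrix f g from rfl,
    det_smul, Fintype.card_fin]

def smithForm (n p r : ℕ) (γ : ℕ → α) : Matrix (Fin n) (Fin p) α :=
  of fun i j => if (i : ℕ) = j ∧ (i : ℕ) < r then γ i else 0

theorem prod_range_dvd_det_submatrix_smithForm {n p r ℓ : ℕ} {γ : ℕ → α}
    (hγ : ∀ i, i + 1 < r → γ i ∣ γ (i + 1)) (f : Fin ℓ → Fin n) (g : Fin ℓ → Fin p) :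
    ∏ j ∈ range ℓ, γ j ∣ ((smithForm n p r γ).submatrix f g).det := by
  by_cases hg : Function.Injective g
  swap
  · rw [det_submatrix_eq_zero_of_not_injective_right _ f hg]; exact dvd_zero _
  rw [det_apply]
  refine dvd_sum fun σ _ => dvd_smul_of_dvd _ ?_
  by_cases hσ : ∀ a, (f (σ a) : ℕ) = g a ∧ (f (σ a) : ℕ) < r
  · let s := univ.map ((⟨g, hg⟩ : Fin ℓ ↪ Fin p).trans Fin.valEmbedding)
    have hs : #s = ℓ := by simp [s]
    have hprod : ∏ a, (smithForm n p r γ).submatrix f g (σ a) a = ∏ x ∈ s, γ x := by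
      simp only [s, prod_map]
      refine prod_congr rfl fun a _ => ?_
      rw [submatrix_apply, smithForm, of_apply, if_pos (hσ a), (hσ a).1]
      rfl
    rw [hprod, ← hs]
    refine prod_range_card_dvd_prod hγ s fun x hx => ?_
    obtain ⟨a, -, rfl⟩ := mem_map.1 hx
    simpa [← (hσ a).1] using (hσ a).2
  · obtain ⟨a, ha⟩ := not_forall.1 hσ
    rw [prod_eq_zero (mem_univ a) (by rw [submatrix_apply, smithForm, of_apply, if_neg ha])]
    exact dvd_zero _

theorem submatrix_castLE_smithForm {n p r ℓ : ℕ} (γ : ℕ → α) (hℓ : ℓ ≤ r) (hn : ℓ ≤ n)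
    (hp : ℓ ≤ p) :
    (smithForm n p r γ).submatrix (Fin.castLE hn) (Fin.castLE hp) =
      diagonal fun a : Fin ℓ => γ a := by
  ext a b
  by_cases hab : a = b
  · subst hab
    simp [smithForm, show (a : ℕ) < r by omega]
  · simp [smithForm, Fin.val_eq_val, hab]

theorem minorIdeal_smithForm_le {n p r : ℕ} {γ : ℕ → α} (hγ : ∀ i, i + 1 < r → γ i ∣ γ (i + 1))
    (ℓ : ℕ) : minorIdeal ℓ (smithForm n p r γ) ≤ Ideal.span {∏ j ∈ range ℓ, γ j} :=
  minorIdeal_le_iff.2 fun f g =>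
    Ideal.mem_span_singleton.2 (prod_range_dvd_det_submatrix_smithForm hγ f g)

end Matrix

theorem RatFunc.denom_dvd_iff_dvd_mul {K : Type*} [Field K] {x : RatFunc K} {a b q : K[X]}
    (hb : b ≠ 0) (hq : q ≠ 0)
    (hx : algebraMap K[X] (RatFunc K) a = algebraMap K[X] (RatFunc K) b * x) :
    x.denom ∣ q ↔ b ∣ a * q := by
  have hb' := RatFunc.algebraMap_ne_zero hb
  have hq' := RatFunc.algebraMap_ne_zero hq
  rw [RatFunc.denom_dvd hq]
  refine exists_congr fun c => ?_
  rw [eq_div_iff hq', ← (mul_right_injective₀ hb').eq_iff, ← mul_assoc, ← hx, ← map_mul,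
    ← map_mul, (RatFunc.algebraMap_injective K).eq_iff]

section detDen

variable {K : Type*} [Field K] {n p : ℕ}

theorem detDen_dvd_iff {R : Matrix (Fin n) (Fin p) (RatFunc K)} {i : ℕ} {q : K[X]} :
    detDen R i ∣ q ↔ ∀ ℓ ≤ i, ∀ (f : Fin ℓ ↪ Fin n) (g : Fin ℓ ↪ Fin p),
      (R.submatrix f g).det.denom ∣ q := by
  simp only [detDen, Finset.lcm_dvd_iff, mem_range, Nat.lt_succ_iff, mem_univ, true_implies,
    Prod.forall]
  rfl

theorem detDen_dvd_detDen (R : Matrix (Fin n) (Fin p) (RatFunc K)) {i j : ℕ} (hij : i ≤ j) :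
    detDen R i ∣ detDen R j :=
  detDen_dvd_iff.2 fun ℓ hℓ => detDen_dvd_iff.1 dvd_rfl ℓ (hℓ.trans hij)

theorem detDen_ne_zero (R : Matrix (Fin n) (Fin p) (RatFunc K)) (i : ℕ) : detDen R i ≠ 0 := by
  simp only [detDen, Ne, Finset.lcm_eq_zero_iff, not_exists, not_and]
  exact fun _ _ _ _ => RatFunc.denom_ne_zero _

theorem detDen_monic (R : Matrix (Fin n) (Fin p) (RatFunc K)) (i : ℕ) : (detDen R i).Monic := by
  classical
  have h : normalize (detDen R i) = detDen R i := normalize_lcm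
  rw [← h]
  exact monic_normalize (detDen_ne_zero R i)

theorem detDen_zero (R : Matrix (Fin n) (Fin p) (RatFunc K)) : detDen R 0 = 1 :=
  (detDen_monic R 0).eq_one_of_isUnit <| isUnit_of_dvd_one <| detDen_dvd_iff.2 fun ℓ hℓ f g => by
    obtain rfl : ℓ = 0 := by omega
    simp

theorem detDen_dvd_iff_pow_dvd {R : Matrix (Fin n) (Fin p) (RatFunc K)}
    {N : Matrix (Fin n) (Fin p) K[X]} {c : K[X]}
    (hN : N.map (algebraMap K[X] (RatFunc K)) = algebraMap K[X] (RatFunc K) c • R) (hc : c ≠ 0)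
    {i : ℕ} {q : K[X]} (hq : q ≠ 0) :
    detDen R i ∣ q ↔ ∀ ℓ ≤ i, ∀ (f : Fin ℓ ↪ Fin n) (g : Fin ℓ ↪ Fin p),
      c ^ ℓ ∣ (N.submatrix f g).det * q := by
  rw [detDen_dvd_iff]
  refine forall₂_congr fun ℓ _ => forall₂_congr fun f g => RatFunc.denom_dvd_iff_dvd_mul
    (pow_ne_zero ℓ hc) hq ?_
  rw [map_pow]
  exact Matrix.algebraMap_det_submatrix_of_map_eq_smul hN f g

theorem minorIdeal_le_colon_detDen {R : Matrix (Fin n) (Fin p) (RatFunc K)}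
    {N : Matrix (Fin n) (Fin p) K[X]} {c : K[X]}
    (hN : N.map (algebraMap K[X] (RatFunc K)) = algebraMap K[X] (RatFunc K) c • R) (hc : c ≠ 0)
    (ℓ : ℕ) : N.minorIdeal ℓ ≤ (Ideal.span {c ^ ℓ}).colon {detDen R ℓ} :=
  Matrix.minorIdeal_le_iff_embedding.2 fun f g => by
    rw [Submodule.mem_colon_singleton, smul_eq_mul, Ideal.mem_span_singleton]
    exact (detDen_dvd_iff_pow_dvd hN hc (detDen_ne_zero R ℓ)).1 dvd_rfl ℓ le_rfl f g

end detDen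

section SmithMcMillan

variable {K : Type*} [Field K] {n p : ℕ} {R : Matrix (Fin n) (Fin p) (RatFunc K)}
  {N : Matrix (Fin n) (Fin p) K[X]} {c : K[X]}

theorem detDen_dvd_prod_of_minorIdeal_le
    (hN : N.map (algebraMap K[X] (RatFunc K)) = algebraMap K[X] (RatFunc K) c • R) (hc : c ≠ 0)
    {γ ε ψ : ℕ → K[X]} {i : ℕ} (hψ : ∀ j < i, ψ j ≠ 0)
    (hγ : ∀ ℓ ≤ i, N.minorIdeal ℓ ≤ Ideal.span {∏ j ∈ range ℓ, γ j})
    (hlow : ∀ j < i, γ j * ψ j = ε j * c) : detDen R i ∣ ∏ j ∈ range i, ψ j := by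
  refine (detDen_dvd_iff_pow_dvd hN hc (prod_ne_zero_iff.2 fun j hj => hψ j (mem_range.1 hj))).2
    fun ℓ hℓ f g => ?_
  obtain ⟨t, ht⟩ := Ideal.mem_span_singleton.1 (hγ ℓ hℓ (N.det_submatrix_mem_minorIdeal f g))
  calc c ^ ℓ ∣ (∏ j ∈ range ℓ, γ j) * ∏ j ∈ range ℓ, ψ j := by
        rw [prod_range_mul_prod_range_eq_prod_range_mul_pow fun j hj => hlow j (by omega)]
        exact dvd_mul_left _ _
    _ ∣ (N.submatrix f g).det * ∏ j ∈ range i, ψ j := by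
        rw [ht, ← prod_range_mul_prod_Ico ψ hℓ]
        exact ⟨t * ∏ j ∈ Ico ℓ i, ψ j, by ring⟩

theorem pow_dvd_prod_mul_detDen
    (hN : N.map (algebraMap K[X] (RatFunc K)) = algebraMap K[X] (RatFunc K) c • R) (hc : c ≠ 0)
    {U : Matrix (Fin n) (Fin n) K[X]} {V : Matrix (Fin p) (Fin p) K[X]} (hU : IsUnit U.det)
    (hV : IsUnit V.det) {r : ℕ} {γ : ℕ → K[X]} (hS : U * N * V = Matrix.smithForm n p r γ)
    {ℓ : ℕ} (hℓ : ℓ ≤ r) (hn : ℓ ≤ n) (hp : ℓ ≤ p) :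
    c ^ ℓ ∣ (∏ j ∈ range ℓ, γ j) * detDen R ℓ := by
  have hmem := (Matrix.smithForm n p r γ).det_submatrix_mem_minorIdeal (Fin.castLE hn)
    (Fin.castLE hp)
  rw [Matrix.submatrix_castLE_smithForm γ hℓ, Matrix.det_diagonal,
    Fin.prod_univ_eq_prod_range (fun j => γ j), ← hS,
    Matrix.minorIdeal_mul_mul_of_isUnit_det ℓ hU hV] at hmem
  have hcolon := minorIdeal_le_colon_detDen hN hc ℓ hmem
  rwa [Submodule.mem_colon_singleton, smul_eq_mul, Ideal.mem_span_singleton] at hcolon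

/-- The quotient `(detDen R i * ψ) / detDen R (i + 1)` divides both `ψ` and `E`. -/
theorem detDen_succ_eq_mul {i : ℕ} {ψ Γ E b : K[X]} (hb : b ≠ 0) (hψ : ψ.Monic)
    (hupper : detDen R (i + 1) ∣ detDen R i * ψ) (hlower : b ∣ Γ * detDen R (i + 1))
    (hΓ : Γ * (detDen R i * ψ) = E * b) (hcop : IsCoprime E ψ) :
    detDen R (i + 1) = detDen R i * ψ := by
  obtain ⟨q, hq⟩ := hupper
  obtain ⟨s, hs⟩ := detDen_dvd_detDen R (Nat.le_add_right i 1)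
  obtain ⟨a, ha⟩ := hlower
  have hψq : ψ = s * q :=
    mul_left_cancel₀ (detDen_ne_zero R i) (by rw [hq, hs]; ring)
  have hEq : E = a * q := mul_right_cancel₀ hb (by linear_combination (-1) * hΓ + Γ * hq + q * ha)
  have hunit : IsUnit q :=
    hcop.isUnit_of_dvd' ⟨a, by rw [hEq, mul_comm]⟩ ⟨s, by rw [hψq, mul_comm]⟩
  refine eq_of_monic_of_associated (detDen_monic R _) ((detDen_monic R i).mul hψ) ?_
  rw [hq]
  exact ⟨hunit.unit, by rw [hunit.unit_spec]⟩

end SmithMcMillan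

/-- Smith–McMillan form and determinantal denominators: if `N = φ_1(R)·R` has Smith normal
form with invariant factors `γ_1 ∣ ⋯ ∣ γ_r` (`r = rank R`), and `γ_i/φ_1(R) = ε_i/ψ_i` in
lowest terms with `ψ_i` monic, then `φ_i(R) = ψ_1 ⋯ ψ_i` for all `1 ≤ i ≤ r`. -/
theorem detDen_eq_prod_smithMcMillan {n p : ℕ} (R : Matrix (Fin n) (Fin p) (RatFunc k))
    (N : Matrix (Fin n) (Fin p) (Polynomial k))
    (hN : N.map (algebraMap (Polynomial k) (RatFunc k)) =
      (algebraMap (Polynomial k) (RatFunc k) (detDen R 1)) • R)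
    (U : Matrix (Fin n) (Fin n) (Polynomial k)) (V : Matrix (Fin p) (Fin p) (Polynomial k))
    (hU : IsUnit U.det) (hV : IsUnit V.det)
    (γ : ℕ → Polynomial k)
    (hsmith : ∀ i j, (U * N * V) i j =
      if (i : ℕ) = (j : ℕ) ∧ (i : ℕ) < R.rank then γ (i : ℕ) else 0)
    (hchain : ∀ i : ℕ, i + 1 < R.rank → γ i ∣ γ (i + 1))
    (ε ψ : ℕ → Polynomial k) (hψmonic : ∀ i, i < R.rank → (ψ i).Monic)
    (hcop : ∀ i, i < R.rank → IsCoprime (ε i) (ψ i))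
    (hlow : ∀ i, i < R.rank → γ i * ψ i = ε i * detDen R 1) :
    ∀ i : ℕ, 1 ≤ i → i ≤ R.rank → detDen R i = ∏ j ∈ Finset.range i, ψ j := by
  suffices h : ∀ i ≤ R.rank, detDen R i = ∏ j ∈ range i, ψ j from fun i _ hi => h i hi
  have hφ : detDen R 1 ≠ 0 := detDen_ne_zero R 1
  have hS : U * N * V = Matrix.smithForm n p R.rank γ := Matrix.ext hsmith
  have hγ : ∀ ℓ, N.minorIdeal ℓ ≤ Ideal.span {∏ j ∈ range ℓ, γ j} := fun ℓ => by
    rw [← Matrix.minorIdeal_mul_mul_of_isUnit_det ℓ hU hV N, hS]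
    exact Matrix.minorIdeal_smithForm_le hchain ℓ
  have hψ : ∀ a b, a ≤ b → b < R.rank → ψ b ∣ ψ a := fun a b => dvd_of_le_of_forall_succ_dvd
    fun j hj => (hcop (j + 1) hj).dvd_of_dvd_of_mul_eq_mul hφ (hlow j (by omega))
      (hlow (j + 1) hj) (hchain j hj)
  have hn : R.rank ≤ n := by simpa using R.rank_le_card_height
  have hp : R.rank ≤ p := by simpa using R.rank_le_card_width
  intro i hir
  induction i with
  | zero => simp [detDen_zero]
  | succ i ih =>
    have hprev : detDen R i = ∏ j ∈ range i, ψ j := ih (by omega)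
    rw [prod_range_succ, ← hprev]
    refine detDen_succ_eq_mul (E := ∏ j ∈ range (i + 1), ε j) (pow_ne_zero (i + 1) hφ)
      (hψmonic i hir) ?_
      (pow_dvd_prod_mul_detDen hN hφ hU hV hS hir (hir.trans hn) (hir.trans hp)) ?_ ?_
    · rw [hprev, ← prod_range_succ]
      exact detDen_dvd_prod_of_minorIdeal_le hN hφ (fun j hj => (hψmonic j (by omega)).ne_zero)
        (fun ℓ _ => hγ ℓ) fun j hj => hlow j (by omega)
    · rw [hprev, ← prod_range_succ]
      exact prod_range_mul_prod_range_eq_prod_range_mul_pow fun j hj => hlow j (by omega)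
    · refine IsCoprime.prod_left fun j hj => ?_
      have hji : j ≤ i := Nat.lt_succ_iff.1 (mem_range.1 hj)
      exact (hcop j (by omega)).of_isCoprime_of_dvd_right (hψ j i hji hir)
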